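/- arXiv:2105.05127 — 3 statements merged into one kernel-verified Lean document; each statement's English description precedes it below -/
import Mathlib

section
/- Let d ≥ 1 and let K ⊆ ℝ^d be a nonempty compact convex set such that for every x = (x_1,…,x_d) ∈ K one has max_{1≤i≤d} x_i > 0. Then there exist strictly positive real numbers α_1,…,α_d and κ > 0 such that for every x ∈ K, Σ_{i=1}^d α_i x_i ≥ κ. -/
/-! Strict separation of `K` from the closed convex cone `Iic 0` of nonpositive vectors gives a
functional that is positive on `K` and bounded above, hence nonpositive, on the cone; its
coefficients are nonnegative weights with `∑ i, a i * x i` bounded away from `0` on `K`. Adding a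
small `ε > 0` to every weight makes them strictly positive while costing at most `ε` times a
lower bound of `∑ i, x i` on the compact set `K`. -/

open Finset

section

variable {ι : Type*} [Fintype ι]

theorem exists_nonneg_weights_of_disjoint_Iic {K : Set (ι → ℝ)} (hcpt : IsCompact K)
    (hconv : Convex ℝ K) (hdisj : Disjoint (Set.Iic 0) K) :
    ∃ a : ι → ℝ, 0 ≤ a ∧ ∃ κ : ℝ, 0 < κ ∧ ∀ x ∈ K, κ ≤ ∑ i, a i * x i := by
  classical
  obtain ⟨f, u, v, hf_orthant, huv, hf_K⟩ :=
    geometric_hahn_banach_closed_compact (convex_Iic 0) isClosed_Iic hconv hcpt hdisj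
  have hu : 0 < u := by simpa using hf_orthant 0 (Set.mem_Iic.2 le_rfl)
  have hf_nonpos : ∀ y ≤ 0, f y ≤ 0 := by
    intro y hy
    by_contra! hfy
    obtain ⟨n, hn⟩ := Archimedean.arch u hfy
    have := hf_orthant (n • y) (nsmul_nonpos hy n)
    rw [map_nsmul] at this
    linarith
  refine ⟨fun i => f (Pi.single i 1), fun i => ?_, v, huv.trans' hu, fun x hx => ?_⟩
  · simpa using hf_nonpos (-Pi.single i 1) (by simp [Pi.single_nonneg])
  · calc v ≤ f x := (hf_K x hx).le
      _ = ∑ i, f (Pi.single i 1) * x i := by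
        conv_lhs => rw [pi_eq_sum_univ' x]
        simp only [map_sum, map_smul, smul_eq_mul, mul_comm]

theorem exists_pos_weights_of_nonneg_weights {K : Set (ι → ℝ)} (hcpt : IsCompact K)
    {a : ι → ℝ} (ha : 0 ≤ a) {κ : ℝ} (hκ : 0 < κ) (h : ∀ x ∈ K, κ ≤ ∑ i, a i * x i) :
    ∃ α : ι → ℝ, (∀ i, 0 < α i) ∧ ∃ κ' : ℝ, 0 < κ' ∧ ∀ x ∈ K, κ' ≤ ∑ i, α i * x i := by
  obtain ⟨M, hM⟩ := hcpt.bddBelow_image (f := fun x : ι → ℝ => ∑ i, x i) (by fun_prop)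
  set ε := κ / (2 * (|M| + 1))
  have hε : 0 < ε := by positivity
  have hεM : ε * (|M| + 1) = κ / 2 := by simp only [ε]; field_simp
  refine ⟨fun i => a i + ε, fun i => add_pos_of_nonneg_of_pos (ha i) hε, κ / 2, by positivity,
    fun x hx => ?_⟩
  have hsum : -|M| ≤ ∑ i, x i := (neg_abs_le M).trans (hM ⟨x, hx, rfl⟩)
  calc κ / 2 ≤ κ + ε * -|M| := by nlinarith
    _ ≤ ∑ i, a i * x i + ε * ∑ i, x i := by gcongr; exact h x hx
    _ = ∑ i, (a i + ε) * x i := by simp only [add_mul, sum_add_distrib, mul_sum]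

end

theorem stmt_0_general (d : ℕ) (K : Set (Fin d → ℝ))
    (hcpt : IsCompact K) (hconv : Convex ℝ K)
    (hpos : ∀ x ∈ K, ∃ i, 0 < x i) :
    ∃ α : Fin d → ℝ, (∀ i, 0 < α i) ∧ ∃ κ : ℝ, 0 < κ ∧
      ∀ x ∈ K, κ ≤ ∑ i, α i * x i := by
  have hdisj : Disjoint (Set.Iic 0) K := by
    refine Set.disjoint_left.2 fun x hx hxK => ?_
    obtain ⟨i, hi⟩ := hpos x hxK
    exact (hx i).not_gt hi
  obtain ⟨a, ha, κ, hκ, hK⟩ := exists_nonneg_weights_of_disjoint_Iic hcpt hconv hdisj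
  exact exists_pos_weights_of_nonneg_weights hcpt ha hκ hK

/-- Finite-dimensional minimax/weight-selection principle: if `K ⊆ ℝ^d` is a nonempty
compact convex set on which `max_i x_i > 0`, then there are strictly positive weights
`α_i` and `κ > 0` with `∑ i, α_i x_i ≥ κ` on `K`. -/
theorem stmt_0 (d : ℕ) (hd : 1 ≤ d) (K : Set (Fin d → ℝ))
    (hne : K.Nonempty) (hcpt : IsCompact K) (hconv : Convex ℝ K)
    (hpos : ∀ x ∈ K, ∃ i, 0 < x i) :
    ∃ α : Fin d → ℝ, (∀ i, 0 < α i) ∧ ∃ κ : ℝ, 0 < κ ∧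
      ∀ x ∈ K, κ ≤ ∑ i, α i * x i :=
  stmt_0_general d K hcpt hconv hpos
end

section
/- Let r > 0, let μ be a Borel probability measure on the interval [−r,0], and let G : [−r,∞) → [0,∞) be measurable and locally integrable. Then for every t ≥ r, ∫_0^t (∫_{[−r,0]} G(s+u) dμ(u)) ds ≤ ∫_0^r (∫_{[−r,0]} G(s+u) dμ(u)) ds + ∫_0^t G(s) ds. -/
/-!
Split `∫_0^t = ∫_0^r + ∫_r^t` and, on `[r, t]`, swap the two integrals by Fubini. For each delay
`u ∈ [-r, 0]` the shifted window `[r + u, t + u]` lies inside `[0, t]`, where `G ≥ 0`, so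
`∫_r^t G(s + u) ds ≤ ∫_0^t G(s) ds`; averaging over the probability measure `μ` keeps this bound.
-/

open MeasureTheory Set Filter

section DelayedAverage

variable {μ : Measure ℝ} {G : ℝ → ℝ} {a b c d : ℝ}

theorem integrable_comp_add_prod [IsFiniteMeasure μ] (hμ : ∀ᵐ u ∂μ, u ∈ Icc c d)
    (hGm : Measurable G) (hG : IntegrableOn G (Ioc (a + c) (b + d))) :
    Integrable (fun p : ℝ × ℝ => G (p.1 + p.2)) ((volume.restrict (Ioc a b)).prod μ) := by
  have hmeas : Measurable fun p : ℝ × ℝ => G (p.1 + p.2) :=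
    hGm.comp (measurable_fst.add measurable_snd)
  refine ⟨hmeas.aestronglyMeasurable, ?_⟩
  rw [HasFiniteIntegral, lintegral_prod_symm _ hmeas.enorm.aemeasurable]
  have hshift : ∀ᵐ u ∂μ, ∫⁻ s in Ioc a b, ‖G (s + u)‖ₑ ≤ ∫⁻ x in Ioc (a + c) (b + d), ‖G x‖ₑ := by
    filter_upwards [hμ] with u hu
    calc ∫⁻ s in Ioc a b, ‖G (s + u)‖ₑ
        ≤ ∫⁻ s, (Ioc (a + c) (b + d)).indicator (fun x => ‖G x‖ₑ) (s + u) := by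
          refine (setLIntegral_mono' measurableSet_Ioc fun s hs => ?_).trans
            (setLIntegral_le_lintegral _ _)
          rw [indicator_of_mem (show s + u ∈ Ioc (a + c) (b + d) from
            ⟨by linarith [hs.1, hu.1], by linarith [hs.2, hu.2]⟩)]
      _ = ∫⁻ x in Ioc (a + c) (b + d), ‖G x‖ₑ := by
          rw [lintegral_add_right_eq_self _ u, lintegral_indicator measurableSet_Ioc]
  calc ∫⁻ u, ∫⁻ s in Ioc a b, ‖G (s + u)‖ₑ ∂volume ∂μ
      ≤ ∫⁻ _, ∫⁻ x in Ioc (a + c) (b + d), ‖G x‖ₑ ∂volume ∂μ := lintegral_mono_ae hshift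
    _ < ⊤ := by
      rw [lintegral_const]
      exact ENNReal.mul_lt_top hG.hasFiniteIntegral (measure_lt_top μ univ)

theorem setIntegral_integral_comp_add_le [IsProbabilityMeasure μ] (hμ : ∀ᵐ u ∂μ, u ∈ Icc c d)
    (hGm : Measurable G) (hG : IntegrableOn G (Ioc (a + c) (b + d)))
    (hGnn : ∀ x ∈ Ioc (a + c) (b + d), 0 ≤ G x) (hab : a ≤ b) :
    ∫ s in Ioc a b, ∫ u, G (s + u) ∂μ ≤ ∫ x in Ioc (a + c) (b + d), G x := by
  have hprod := integrable_comp_add_prod hμ hGm hG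
  have hshift : ∀ᵐ u ∂μ, ∫ s in Ioc a b, G (s + u) ≤ ∫ x in Ioc (a + c) (b + d), G x := by
    filter_upwards [hμ] with u hu
    rw [← intervalIntegral.integral_of_le hab, intervalIntegral.integral_comp_add_right G u,
      intervalIntegral.integral_of_le (by linarith)]
    refine setIntegral_mono_set hG ?_ (Eventually.of_forall ?_)
    · exact (ae_restrict_iff' measurableSet_Ioc).2 (Eventually.of_forall hGnn)
    · exact fun x hx => ⟨by linarith [hx.1, hu.1], by linarith [hx.2, hu.2]⟩
  calc ∫ s in Ioc a b, ∫ u, G (s + u) ∂μ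
      = ∫ u, ∫ s in Ioc a b, G (s + u) ∂volume ∂μ := integral_integral_swap hprod
    _ ≤ ∫ _, ∫ x in Ioc (a + c) (b + d), G x ∂volume ∂μ :=
        integral_mono_ae hprod.integral_prod_right (integrable_const _) hshift
    _ = ∫ x in Ioc (a + c) (b + d), G x := by simp

end DelayedAverage

theorem stmt_1_general (r : ℝ) (μ : Measure ℝ) [IsProbabilityMeasure μ]
    (hμ : μ (Set.Icc (-r) 0)ᶜ = 0)
    (G : ℝ → ℝ) (hGm : Measurable G) (hGnn : ∀ x, -r ≤ x → 0 ≤ G x)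
    (hGloc : LocallyIntegrableOn G (Set.Ici (-r)))
    (t : ℝ) (ht : r ≤ t) :
    (∫ s in (0:ℝ)..t, ∫ u, G (s + u) ∂μ) ≤
      (∫ s in (0:ℝ)..r, ∫ u, G (s + u) ∂μ) + ∫ s in (0:ℝ)..t, G s := by
  have hsupp : ∀ᵐ u ∂μ, u ∈ Icc (-r) 0 := ae_iff.2 hμ
  have hr : 0 ≤ r := by
    obtain ⟨u, hu⟩ := hsupp.exists
    linarith [hu.1, hu.2]
  have hG : ∀ a b, 0 ≤ a → IntegrableOn G (Ioc (a + -r) (b + 0)) := fun a b ha =>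
    (hGloc.integrableOn_compact_subset (fun x hx => by simp only [mem_Ici]; linarith [hx.1])
      isCompact_Icc).mono_set Ioc_subset_Icc_self
  have hf : ∀ a b, 0 ≤ a → IntegrableOn (fun s => ∫ u, G (s + u) ∂μ) (Ioc a b) := fun a b ha =>
    (integrable_comp_add_prod hsupp hGm (hG a b ha)).integral_prod_left
  rw [← intervalIntegral.integral_add_adjacent_intervals
    ((intervalIntegrable_iff_integrableOn_Ioc_of_le hr).2 (hf 0 r le_rfl))
    ((intervalIntegrable_iff_integrableOn_Ioc_of_le ht).2 (hf r t hr))]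
  gcongr
  rw [intervalIntegral.integral_of_le ht, intervalIntegral.integral_of_le (hr.trans ht)]
  simpa using setIntegral_integral_comp_add_le hsupp hGm (hG r t hr)
    (fun x hx => hGnn x (by linarith [hx.1])) ht

/-- For a probability measure `μ` on `[-r, 0]` and a nonnegative locally integrable
function `G` on `[-r, ∞)`, the delayed time-average is bounded by the undelayed one:
`∫_0^t ∫ G(s+u) dμ(u) ds ≤ ∫_0^r ∫ G(s+u) dμ(u) ds + ∫_0^t G(s) ds` for `t ≥ r`. -/
theorem stmt_1 (r : ℝ) (hr : 0 < r) (μ : Measure ℝ) [IsProbabilityMeasure μ]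
    (hμ : μ (Set.Icc (-r) 0)ᶜ = 0)
    (G : ℝ → ℝ) (hGm : Measurable G) (hGnn : ∀ x, -r ≤ x → 0 ≤ G x)
    (hGloc : LocallyIntegrableOn G (Set.Ici (-r)))
    (t : ℝ) (ht : r ≤ t) :
    (∫ s in (0:ℝ)..t, ∫ u, G (s + u) ∂μ) ≤
      (∫ s in (0:ℝ)..r, ∫ u, G (s + u) ∂μ) + ∫ s in (0:ℝ)..t, G s :=
  stmt_1_general r μ hμ G hGm hGnn hGloc t ht
end

section
/- Let (Ω, F, P) be a probability space with a filtration (F_k)_{k∈ℕ}, let q ∈ (0,1) and m > 0, and let (Z_k)_{k∈ℕ} be a nonnegative integrable adapted process with Z_0 = z almost surely for a constant z ∈ [0,m). Define the stopping time β := inf{k ∈ ℕ : Z_k ≥ m}. Assume that for every k, almost surely on the event {β > k}, E[Z_{k+1} | F_k] ≤ q Z_k. Then E[1_{β>k} Z_k] ≤ q^k z for every k, and P(β < ∞) ≤ q z / ((1−q) m); in particular P(Z_k < m for all k ∈ ℕ) ≥ 1 − q z / ((1−q) m). -/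
open MeasureTheory

/-!
On the event `A k = {Z_0, …, Z_k < m}` (i.e. `β > k`, an `ℱ k`-measurable event) the
conditional contraction integrates to `∫_{A k} Z_{k+1} ≤ q ∫_{A k} Z_k`; since `A (k+1) ⊆ A k`
and `Z ≥ 0`, induction gives `∫_{A k} Z_k ≤ q^k z`. The process first reaches `[m, ∞)` at time
`k + 1` only on `A k ∩ {Z_{k+1} ≥ m}`, whose probability is at most `q^(k+1) z / m` by Markov's
inequality; `β = 0` is excluded by `z < m`, and summing the geometric series bounds `P(β < ∞)`.
-/

section HittingTime

variable {Ω : Type*} {m0 : MeasurableSpace Ω} {P : Measure Ω}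

lemma measurableSet_forall_le_lt {ℱ : Filtration ℕ m0} {Z : ℕ → Ω → ℝ} (hZ : Adapted ℱ Z)
    (m : ℝ) (k : ℕ) : MeasurableSet[ℱ k] {ω | ∀ j ≤ k, Z j ω < m} := by
  simp_rw [Set.ofPred_forall]
  exact .iInter fun j => .iInter fun hj => (hZ j).mono (ℱ.mono hj) le_rfl measurableSet_Iio

lemma setIntegral_mono_of_condExp_le {m' : MeasurableSpace Ω} (hm : m' ≤ m0)
    [SigmaFinite (P.trim hm)] {f g : Ω → ℝ} {s : Set Ω} (hs : MeasurableSet[m'] s)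
    (hf : Integrable f P) (hg : Integrable g P) (hfg : ∀ᵐ ω ∂P, ω ∈ s → P[f|m'] ω ≤ g ω) :
    ∫ ω in s, f ω ∂P ≤ ∫ ω in s, g ω ∂P := by
  rw [← setIntegral_condExp hm hf hs]
  exact setIntegral_mono_ae_restrict integrable_condExp.integrableOn hg.integrableOn
    ((ae_restrict_iff' (hm s hs)).2 hfg)

lemma mul_measureReal_inter_le_setIntegral {f : Ω → ℝ} {s : Set Ω} (hs : MeasurableSet s)
    (hf : Integrable f P) (hf_nonneg : ∀ᵐ ω ∂P, 0 ≤ f ω) (c : ℝ) :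
    c * P.real ({ω | c ≤ f ω} ∩ s) ≤ ∫ ω in s, f ω ∂P := by
  rw [← measureReal_restrict_apply' hs]
  exact mul_meas_ge_le_integral_of_nonneg (ae_restrict_of_ae hf_nonneg) hf.integrableOn c

lemma setOf_exists_le_subset (Z : ℕ → Ω → ℝ) (m : ℝ) :
    {ω | ∃ k, m ≤ Z k ω} ⊆
      {ω | m ≤ Z 0 ω} ∪ ⋃ k, {ω | m ≤ Z (k + 1) ω} ∩ {ω | ∀ j ≤ k, Z j ω < m} := by
  intro ω hω
  classical
  have hfirst : ∀ j < Nat.find hω, Z j ω < m := fun j hj => not_le.1 (Nat.find_min hω hj)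
  rcases hk : Nat.find hω with _ | k
  · exact .inl (hk ▸ Nat.find_spec hω)
  · refine .inr (Set.mem_iUnion.2 ⟨k, hk ▸ Nat.find_spec hω, fun j hj => hfirst j ?_⟩)
    omega

lemma tsum_ofReal_pow_succ_mul {q c : ℝ} (hq0 : 0 ≤ q) (hq1 : q < 1) (hc : 0 ≤ c) :
    ∑' k : ℕ, ENNReal.ofReal (q ^ (k + 1) * c) = ENNReal.ofReal (q * c / (1 - q)) := by
  have hsum : HasSum (fun k : ℕ => q ^ (k + 1) * c) (q * c / (1 - q)) := by
    have h := (hasSum_geometric_of_lt_one hq0 hq1).mul_left (q * c)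
    rw [← div_eq_mul_inv] at h
    exact h.congr_fun fun k => by ring
  rw [← ENNReal.ofReal_tsum_of_nonneg (fun k => by positivity) hsum.summable, hsum.tsum_eq]

variable [IsProbabilityMeasure P] {ℱ : Filtration ℕ m0} {Z : ℕ → Ω → ℝ} {q m z : ℝ}

lemma setIntegral_forall_le_lt_succ_le_mul (hZ : Adapted ℱ Z) (hint : ∀ k, Integrable (Z k) P)
    (hcontr : ∀ k, ∀ᵐ ω ∂P, (∀ j ≤ k, Z j ω < m) → (P[Z (k + 1)|ℱ k]) ω ≤ q * Z k ω)
    (k : ℕ) :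
    ∫ ω in {ω | ∀ j ≤ k, Z j ω < m}, Z (k + 1) ω ∂P ≤
      q * ∫ ω in {ω | ∀ j ≤ k, Z j ω < m}, Z k ω ∂P := by
  rw [← integral_const_mul]
  exact setIntegral_mono_of_condExp_le (ℱ.le k) (measurableSet_forall_le_lt hZ m k)
    (hint (k + 1)) ((hint k).const_mul q) (hcontr k)

lemma setIntegral_forall_le_lt_le_pow_mul (hq : 0 ≤ q) (hZ : Adapted ℱ Z)
    (hint : ∀ k, Integrable (Z k) P) (hnn : ∀ k, ∀ᵐ ω ∂P, 0 ≤ Z k ω)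
    (hZ0 : ∀ᵐ ω ∂P, Z 0 ω = z)
    (hcontr : ∀ k, ∀ᵐ ω ∂P, (∀ j ≤ k, Z j ω < m) → (P[Z (k + 1)|ℱ k]) ω ≤ q * Z k ω)
    (k : ℕ) : ∫ ω in {ω | ∀ j ≤ k, Z j ω < m}, Z k ω ∂P ≤ q ^ k * z := by
  induction k with
  | zero =>
    calc _ ≤ ∫ ω, Z 0 ω ∂P := setIntegral_le_integral (hint 0) (hnn 0)
      _ = q ^ 0 * z := by simp [integral_congr_ae hZ0]
  | succ k ih =>
    have hsub : {ω | ∀ j ≤ k + 1, Z j ω < m} ⊆ {ω | ∀ j ≤ k, Z j ω < m} :=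
      fun ω hω j hj => hω j (hj.trans k.le_succ)
    calc _ ≤ ∫ ω in {ω | ∀ j ≤ k, Z j ω < m}, Z (k + 1) ω ∂P :=
          setIntegral_mono_set (hint _).integrableOn (ae_restrict_of_ae (hnn _))
            hsub.eventuallyLE
      _ ≤ q * ∫ ω in {ω | ∀ j ≤ k, Z j ω < m}, Z k ω ∂P :=
          setIntegral_forall_le_lt_succ_le_mul hZ hint hcontr k
      _ ≤ q * (q ^ k * z) := by gcongr
      _ = q ^ (k + 1) * z := by ring

lemma measure_first_hit_succ_le (hq : 0 ≤ q) (hm : 0 < m) (hz : 0 ≤ z) (hZ : Adapted ℱ Z)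
    (hint : ∀ k, Integrable (Z k) P) (hnn : ∀ k, ∀ᵐ ω ∂P, 0 ≤ Z k ω)
    (hZ0 : ∀ᵐ ω ∂P, Z 0 ω = z)
    (hcontr : ∀ k, ∀ᵐ ω ∂P, (∀ j ≤ k, Z j ω < m) → (P[Z (k + 1)|ℱ k]) ω ≤ q * Z k ω)
    (k : ℕ) :
    P ({ω | m ≤ Z (k + 1) ω} ∩ {ω | ∀ j ≤ k, Z j ω < m}) ≤
      ENNReal.ofReal (q ^ (k + 1) * (z / m)) := by
  rw [ENNReal.le_ofReal_iff_toReal_le (measure_ne_top _ _) (by positivity), ← measureReal_def,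
    mul_div_assoc', le_div_iff₀' hm]
  calc _ ≤ ∫ ω in {ω | ∀ j ≤ k, Z j ω < m}, Z (k + 1) ω ∂P :=
        mul_measureReal_inter_le_setIntegral (ℱ.le k _ (measurableSet_forall_le_lt hZ m k))
          (hint _) (hnn _) m
    _ ≤ q * ∫ ω in {ω | ∀ j ≤ k, Z j ω < m}, Z k ω ∂P :=
        setIntegral_forall_le_lt_succ_le_mul hZ hint hcontr k
    _ ≤ q * (q ^ k * z) := by
        gcongr; exact setIntegral_forall_le_lt_le_pow_mul hq hZ hint hnn hZ0 hcontr k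
    _ = q ^ (k + 1) * z := by ring

lemma measure_exists_le_le (hq : q ∈ Set.Ioo (0 : ℝ) 1) (hm : 0 < m) (hz : 0 ≤ z) (hzm : z < m)
    (hZ : Adapted ℱ Z) (hint : ∀ k, Integrable (Z k) P) (hnn : ∀ k, ∀ᵐ ω ∂P, 0 ≤ Z k ω)
    (hZ0 : ∀ᵐ ω ∂P, Z 0 ω = z)
    (hcontr : ∀ k, ∀ᵐ ω ∂P, (∀ j ≤ k, Z j ω < m) → (P[Z (k + 1)|ℱ k]) ω ≤ q * Z k ω) :
    P {ω | ∃ k, m ≤ Z k ω} ≤ ENNReal.ofReal (q * z / ((1 - q) * m)) := by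
  have hZ0m : P {ω | m ≤ Z 0 ω} = 0 :=
    measure_eq_zero_iff_ae_notMem.2 (hZ0.mono fun ω h => by simp [h, hzm])
  calc _ ≤ P {ω | m ≤ Z 0 ω} +
        ∑' k, P ({ω | m ≤ Z (k + 1) ω} ∩ {ω | ∀ j ≤ k, Z j ω < m}) :=
        (measure_mono (setOf_exists_le_subset Z m)).trans <|
          (measure_union_le _ _).trans (by gcongr; exact measure_iUnion_le _)
    _ ≤ ∑' k : ℕ, ENNReal.ofReal (q ^ (k + 1) * (z / m)) := by
        rw [hZ0m, zero_add]
        exact ENNReal.tsum_le_tsum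
          (measure_first_hit_succ_le hq.1.le hm hz hZ hint hnn hZ0 hcontr)
    _ = _ := by
        rw [tsum_ofReal_pow_succ_mul hq.1.le hq.2 (by positivity)]
        congr 1
        field_simp

end HittingTime

/-- Discrete-time contraction/hitting-time estimate: if a nonnegative adapted process
`Z` starts at `z < m` and satisfies `E[Z_{k+1} | F_k] ≤ q Z_k` on the event that `Z` has
stayed below `m` up to time `k`, then `E[1_{β>k} Z_k] ≤ q^k z` where `β` is the hitting
time of `[m, ∞)`, `P(β < ∞) ≤ q z/((1-q) m)`, and
`P(Z_k < m for all k) ≥ 1 - q z/((1-q) m)`. -/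
theorem stmt_8 {Ω : Type*} {m0 : MeasurableSpace Ω} {P : Measure Ω} [IsProbabilityMeasure P]
    (ℱ : Filtration ℕ m0) (q m z : ℝ) (hq : q ∈ Set.Ioo (0:ℝ) 1) (hm : 0 < m)
    (hz : 0 ≤ z) (hzm : z < m)
    (Z : ℕ → Ω → ℝ) (hadapt : Adapted ℱ Z) (hint : ∀ k, Integrable (Z k) P)
    (hnn : ∀ k, ∀ᵐ ω ∂P, 0 ≤ Z k ω)
    (hZ0 : ∀ᵐ ω ∂P, Z 0 ω = z)
    (hcontr : ∀ k, ∀ᵐ ω ∂P, (∀ j ≤ k, Z j ω < m) → (P[Z (k + 1)|ℱ k]) ω ≤ q * Z k ω) :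
    (∀ k, (∫ ω in {ω | ∀ j ≤ k, Z j ω < m}, Z k ω ∂P) ≤ q ^ k * z) ∧
      (P {ω | ∃ k, m ≤ Z k ω}).toReal ≤ q * z / ((1 - q) * m) ∧
      1 - q * z / ((1 - q) * m) ≤ (P {ω | ∀ k, Z k ω < m}).toReal := by
  have hhit : P.real {ω | ∃ k, m ≤ Z k ω} ≤ q * z / ((1 - q) * m) :=
    ENNReal.toReal_le_of_le_ofReal
      (div_nonneg (mul_nonneg hq.1.le hz) (mul_nonneg (sub_nonneg.2 hq.2.le) hm.le))
      (measure_exists_le_le hq hm hz hzm hadapt hint hnn hZ0 hcontr)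
  refine ⟨setIntegral_forall_le_lt_le_pow_mul hq.1.le hadapt hint hnn hZ0 hcontr, hhit, ?_⟩
  have hcompl : {ω | ∀ k, Z k ω < m} = {ω | ∃ k, m ≤ Z k ω}ᶜ := by
    ext ω; simp
  have hmeas : MeasurableSet {ω | ∃ k, m ≤ Z k ω} := by
    simp_rw [Set.ofPred_exists]
    exact .iUnion fun k => measurableSet_le measurable_const ((hadapt k).mono (ℱ.le k) le_rfl)
  rw [hcompl, ← measureReal_def, probReal_compl_eq_one_sub hmeas]
  linarith
end
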